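/- The class of shuffled joins of pure shifted ordered complexes — all ordered complexes (w,Σ) on a finite set I such that I is a disjoint union I_1 ∪ ⋯ ∪ I_q, Σ = Σ_1 * ⋯ * Σ_q, and each (w|I_j, Σ_j) is a pure shifted ordered complex — is a Hopf class. -/

import Mathlib

/-!
Faces of a join `Σ₁ * ⋯ * Σ_q` on disjoint ground sets are exactly the sets whose trace on each
`I_j` is a face of `Σ_j`; hence facets of a join are unions of facets of the factors, and purity
passes to joins. An initial segment `A` of a shuffle `w` meets each `I_j` in an initial segment of
`w|I_j`, restriction to `A` commutes with joins, and the link in the join of a facet `τ` of `Σ|A`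
is the join of the links of the traces `τ ∩ I_j`, which are facets of the `Σ_j|A`. So everything
reduces to a single pure shifted complex `Σ`. There shifting does the work: a facet of `Σ|A`
missing a vertex of `A` is a facet of `Σ`, so any two facets of `Σ|A` have equal size; and if `ρ`
is a facet of the link of a facet `τ` of `Σ|A`, then `ρ ∪ τ` is a facet of `Σ`.
-/

namespace OrderedComplexes

variable {α : Type*} [DecidableEq α]

/-- A (downward closed) simplicial complex, as a finite set of faces. -/
def IsComplex (S : Finset (Finset α)) : Prop := ∀ σ ∈ S, ∀ τ ⊆ σ, τ ∈ S

/-- `σ` is a facet (maximal face) of the complex `S`. -/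
def IsFacet (S : Finset (Finset α)) (σ : Finset α) : Prop :=
  σ ∈ S ∧ ∀ τ ∈ S, σ ⊆ τ → σ = τ

/-- A complex is pure if all of its facets have the same cardinality. -/
def IsPure (S : Finset (Finset α)) : Prop :=
  ∀ σ τ, IsFacet S σ → IsFacet S τ → σ.card = τ.card

/-- The restriction `Σ|T = {σ ∈ Σ : σ ⊆ T}`. -/
def restrictC (S : Finset (Finset α)) (T : Finset α) : Finset (Finset α) :=
  S.filter (· ⊆ T)

/-- The link of `τ` in `Σ`: `{ρ ∈ Σ : ρ ∩ τ = ∅ and ρ ∪ τ ∈ Σ}`. -/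
def linkC (S : Finset (Finset α)) (τ : Finset α) : Finset (Finset α) :=
  S.filter fun ρ => Disjoint ρ τ ∧ ρ ∪ τ ∈ S

/-- The lexicographically smallest (with respect to the linear order `w`, encoded as a
duplicate-free list) facet of the complex `S`, computed greedily along `w`. -/
def lexMinFacet (w : List α) (S : Finset (Finset α)) : Finset α :=
  w.foldl (fun τ a => if insert a τ ∈ S then insert a τ else τ) ∅

/-- The contraction `Σ/A`: the link in `Σ` of the lexicographically smallest facet of the
restriction `Σ|A`. -/
def contractC (w : List α) (S : Finset (Finset α)) (A : Finset α) : Finset (Finset α) :=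
  linkC S (lexMinFacet w (restrictC S A))

/-- An ordered complex: a linear order `w` on a finite ground set (a duplicate-free list)
together with a simplicial complex whose faces are subsets of the ground set. -/
def IsOrderedComplex (w : List α) (S : Finset (Finset α)) : Prop :=
  w.Nodup ∧ (∀ σ ∈ S, σ ⊆ w.toFinset) ∧ IsComplex S

/-- The join of two complexes: `{σ₁ ∪ σ₂ : σ₁ ∈ Σ₁, σ₂ ∈ Σ₂}`. -/
def joinC (S₁ S₂ : Finset (Finset α)) : Finset (Finset α) :=
  (S₁ ×ˢ S₂).image fun p => p.1 ∪ p.2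

/-- `w` is a shuffle of the linear orders `w₁` and `w₂`: a linear order on the union of the
two ground sets restricting to `wᵢ` on each. -/
def IsShuffle (w₁ w₂ w : List α) : Prop :=
  w.Nodup ∧ w.toFinset = w₁.toFinset ∪ w₂.toFinset ∧
    w.filter (fun a => decide (a ∈ w₁.toFinset)) = w₁ ∧
    w.filter (fun a => decide (a ∈ w₂.toFinset)) = w₂

/-- A Hopf class: a class of pure ordered complexes closed under shuffled joins, and under
restriction and contraction by initial segments (with all such restrictions pure).
Here the initial segment of `w` of length `k` is `(w.take k).toFinset`, the order induced on
it is `w.take k`, and the order induced on its complement is `w.drop k`. -/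
def IsHopfClass (Q : Set (List α × Finset (Finset α))) : Prop :=
  (∀ p ∈ Q, IsOrderedComplex p.1 p.2 ∧ IsPure p.2) ∧
  (∀ p₁ ∈ Q, ∀ p₂ ∈ Q, Disjoint p₁.1.toFinset p₂.1.toFinset →
    ∀ w, IsShuffle p₁.1 p₂.1 w → (w, joinC p₁.2 p₂.2) ∈ Q) ∧
  (∀ p ∈ Q, ∀ k : ℕ,
    IsPure (restrictC p.2 (p.1.take k).toFinset) ∧
    (p.1.take k, restrictC p.2 (p.1.take k).toFinset) ∈ Q) ∧
  (∀ p ∈ Q, ∀ k : ℕ,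
    (p.1.drop k, contractC p.1 p.2 (p.1.take k).toFinset) ∈ Q)

/-- Order-decomposability: either `Σ` has exactly one facet, or `Σ` is pure and for every
nonempty proper initial segment `A` of `w` both `Σ|A` and `Σ/A` are pure and (with their
induced orders) order-decomposable. -/
inductive OrderDecomposable : List α → Finset (Finset α) → Prop
  | unique (w : List α) (S : Finset (Finset α)) (σ : Finset α)
      (hσ : IsFacet S σ) (huniq : ∀ τ, IsFacet S τ → τ = σ) :
      OrderDecomposable w S
  | pure (w : List α) (S : Finset (Finset α)) (hpure : IsPure S)
      (hres_pure : ∀ k : ℕ, 0 < k → k < w.length →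
        IsPure (restrictC S (w.take k).toFinset))
      (hcon_pure : ∀ k : ℕ, 0 < k → k < w.length →
        IsPure (contractC w S (w.take k).toFinset))
      (hres : ∀ k : ℕ, 0 < k → k < w.length →
        OrderDecomposable (w.take k) (restrictC S (w.take k).toFinset))
      (hcon : ∀ k : ℕ, 0 < k → k < w.length →
        OrderDecomposable (w.drop k) (contractC w S (w.take k).toFinset)) :
      OrderDecomposable w S


/-- An ordered complex `(w, Σ)` is shifted if replacing any vertex of a face by a smaller
vertex (with respect to `w`) yields another face. -/
def IsShifted (w : List α) (S : Finset (Finset α)) : Prop :=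
  ∀ σ ∈ S, ∀ e ∈ σ, ∀ f ∈ w.toFinset, f ∉ σ →
    w.idxOf f < w.idxOf e → insert f (σ.erase e) ∈ S

/-- `(w, Σ)` is a shuffled join of pure shifted ordered complexes: the ground set is a
disjoint union `I₁ ∪ ⋯ ∪ I_q`, `Σ = Σ₁ * ⋯ * Σ_q`, `w` restricts to `w_j` on each `I_j`,
and each `(w_j, Σ_j)` is a pure shifted ordered complex. -/
def IsShuffledJoinOfShifted (w : List α) (S : Finset (Finset α)) : Prop :=
  ∃ L : List (List α × Finset (Finset α)),
    w.Nodup ∧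
    (L.Pairwise fun q r => Disjoint q.1.toFinset r.1.toFinset) ∧
    w.toFinset = (L.map fun q => q.1.toFinset).foldr (· ∪ ·) ∅ ∧
    (∀ q ∈ L, w.filter (fun a => decide (a ∈ q.1.toFinset)) = q.1) ∧
    S = (L.map fun q => q.2).foldr joinC {∅} ∧
    ∀ q ∈ L, IsOrderedComplex q.1 q.2 ∧ IsPure q.2 ∧ IsShifted q.1 q.2

section Basic

variable {S S₁ S₂ : Finset (Finset α)} {σ τ : Finset α}

lemma mem_restrictC {A : Finset α} : σ ∈ restrictC S A ↔ σ ∈ S ∧ σ ⊆ A :=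
  Finset.mem_filter

lemma mem_linkC : σ ∈ linkC S τ ↔ σ ∈ S ∧ Disjoint σ τ ∧ σ ∪ τ ∈ S :=
  Finset.mem_filter

lemma mem_joinC : σ ∈ joinC S₁ S₂ ↔ ∃ σ₁ ∈ S₁, ∃ σ₂ ∈ S₂, σ₁ ∪ σ₂ = σ := by
  simp [joinC, and_assoc]

lemma restrictC_subset (A : Finset α) : restrictC S A ⊆ S :=
  Finset.filter_subset _ _

lemma linkC_subset : linkC S τ ⊆ S :=
  Finset.filter_subset _ _

lemma IsComplex.restrictC (hS : IsComplex S) (A : Finset α) : IsComplex (restrictC S A) := by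
  intro σ hσ ρ hρ
  rw [mem_restrictC] at hσ ⊢
  exact ⟨hS σ hσ.1 ρ hρ, hρ.trans hσ.2⟩

lemma IsComplex.linkC (hS : IsComplex S) (τ : Finset α) : IsComplex (linkC S τ) := by
  intro σ hσ ρ hρ
  rw [mem_linkC] at hσ ⊢
  exact ⟨hS σ hσ.1 ρ hρ, hσ.2.1.mono_left hρ, hS _ hσ.2.2 _ (Finset.union_subset_union_left hρ)⟩

lemma exists_isFacet_superset (hσ : σ ∈ S) :
    ∃ ρ, σ ⊆ ρ ∧ IsFacet S ρ := by
  obtain ⟨ρ, hρ, hmax⟩ := (S.filter (σ ⊆ ·)).exists_max_image Finset.card ⟨σ, by simp [hσ]⟩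
  rw [Finset.mem_filter] at hρ
  refine ⟨ρ, hρ.2, hρ.1, fun γ hγ hργ => ?_⟩
  exact Finset.eq_of_subset_of_card_le hργ (hmax γ (by simp [hγ, hρ.2.trans hργ]))

lemma IsFacet.of_insert (hS : IsComplex S) (hσ : σ ∈ S)
    (h : ∀ a, insert a σ ∈ S → a ∈ σ) : IsFacet S σ := by
  refine ⟨hσ, fun γ hγ hσγ => ?_⟩
  by_contra hne
  obtain ⟨a, haγ, haσ⟩ := Finset.exists_of_ssubset (hσγ.ssubset_of_ne hne)
  exact haσ (h a (hS γ hγ _ (Finset.insert_subset haγ hσγ)))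

lemma IsFacet.mem_of_insert (hσ : IsFacet S σ) {a : α} (ha : insert a σ ∈ S) : a ∈ σ := by
  rw [hσ.2 _ ha (Finset.subset_insert a σ)]
  exact Finset.mem_insert_self a σ

lemma mem_joinC_iff_of_disjoint {I₁ I₂ : Finset α} (h₁ : ∀ σ ∈ S₁, σ ⊆ I₁)
    (h₂ : ∀ σ ∈ S₂, σ ⊆ I₂) (hI : Disjoint I₁ I₂) :
    σ ∈ joinC S₁ S₂ ↔ σ ⊆ I₁ ∪ I₂ ∧ σ ∩ I₁ ∈ S₁ ∧ σ ∩ I₂ ∈ S₂ := by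
  rw [mem_joinC]
  constructor
  · rintro ⟨σ₁, hσ₁, σ₂, hσ₂, rfl⟩
    have e₁ : σ₂ ∩ I₁ = ∅ := Finset.disjoint_iff_inter_eq_empty.mp (hI.symm.mono_left (h₂ σ₂ hσ₂))
    have e₂ : σ₁ ∩ I₂ = ∅ := Finset.disjoint_iff_inter_eq_empty.mp (hI.mono_left (h₁ σ₁ hσ₁))
    rw [Finset.union_inter_distrib_right, Finset.union_inter_distrib_right, e₁, e₂,
      Finset.inter_eq_left.mpr (h₁ σ₁ hσ₁), Finset.inter_eq_left.mpr (h₂ σ₂ hσ₂)]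
    exact ⟨Finset.union_subset_union (h₁ σ₁ hσ₁) (h₂ σ₂ hσ₂), by simpa, by simpa⟩
  · rintro ⟨hσ, hσ₁, hσ₂⟩
    exact ⟨_, hσ₁, _, hσ₂, by rw [← Finset.inter_union_distrib_left, Finset.inter_eq_left.mpr hσ]⟩

end Basic

section Joins

def grounds (L : List (List α × Finset (Finset α))) : Finset α :=
  (L.map fun q => q.1.toFinset).foldr (· ∪ ·) ∅

def joins (L : List (List α × Finset (Finset α))) : Finset (Finset α) :=
  (L.map fun q => q.2).foldr joinC {∅}

def HasDisjointSupports (L : List (List α × Finset (Finset α))) : Prop :=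
  (L.Pairwise fun q r => Disjoint q.1.toFinset r.1.toFinset) ∧
    ∀ q ∈ L, ∀ σ ∈ q.2, σ ⊆ q.1.toFinset

variable {L : List (List α × Finset (Finset α))} {q : List α × Finset (Finset α)}
  {σ : Finset α}

@[simp]
lemma grounds_cons : grounds (q :: L) = q.1.toFinset ∪ grounds L := rfl

@[simp]
lemma joins_cons : joins (q :: L) = joinC q.2 (joins L) := rfl

lemma mem_grounds {a : α} : a ∈ grounds L ↔ ∃ q ∈ L, a ∈ q.1.toFinset := by
  induction L with
  | nil => simp [grounds]
  | cons q L ih => simp [ih]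

lemma toFinset_subset_grounds (hq : q ∈ L) : q.1.toFinset ⊆ grounds L :=
  fun _ ha => mem_grounds.mpr ⟨q, hq, ha⟩

lemma inter_grounds_inter (hq : q ∈ L) :
    σ ∩ grounds L ∩ q.1.toFinset = σ ∩ q.1.toFinset := by
  rw [Finset.inter_assoc, Finset.inter_eq_right.mpr (toFinset_subset_grounds hq)]

lemma HasDisjointSupports.of_cons (h : HasDisjointSupports (q :: L)) : HasDisjointSupports L :=
  ⟨(List.pairwise_cons.mp h.1).2, fun r hr => h.2 r (List.mem_cons_of_mem q hr)⟩

lemma HasDisjointSupports.disjoint_grounds (h : HasDisjointSupports (q :: L)) :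
    Disjoint q.1.toFinset (grounds L) := by
  rw [Finset.disjoint_right]
  intro a ha haq
  obtain ⟨r, hr, har⟩ := mem_grounds.mp ha
  exact Finset.disjoint_left.mp ((List.pairwise_cons.mp h.1).1 r hr) haq har

lemma HasDisjointSupports.eq_or_disjoint (h : HasDisjointSupports L) {r} (hq : q ∈ L)
    (hr : r ∈ L) : q = r ∨ Disjoint q.1.toFinset r.1.toFinset := by
  have : Std.Symm fun q r : List α × Finset (Finset α) => Disjoint q.1.toFinset r.1.toFinset :=
    ⟨fun _ _ h => h.symm⟩
  exact or_iff_not_imp_left.mpr (h.1.forall hq hr)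

lemma HasDisjointSupports.map_snd (h : HasDisjointSupports L)
    {F : List α × Finset (Finset α) → Finset (Finset α)} (hF : ∀ q ∈ L, F q ⊆ q.2) :
    HasDisjointSupports (L.map fun q => (q.1, F q)) := by
  refine ⟨List.pairwise_map.mpr h.1, ?_⟩
  simp only [List.mem_map, forall_exists_index, and_imp]
  rintro _ q hq rfl σ hσ
  exact h.2 q hq σ (hF q hq hσ)

lemma mem_joins (hL : HasDisjointSupports L) :
    σ ∈ joins L ↔ σ ⊆ grounds L ∧ ∀ q ∈ L, σ ∩ q.1.toFinset ∈ q.2 := by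
  induction L generalizing σ with
  | nil => simp [joins, grounds]
  | cons q L ih =>
    have hsupp : ∀ ρ ∈ joins L, ρ ⊆ grounds L := fun ρ hρ => ((ih hL.of_cons).mp hρ).1
    rw [joins_cons, grounds_cons,
      mem_joinC_iff_of_disjoint (hL.2 q List.mem_cons_self) hsupp hL.disjoint_grounds,
      ih hL.of_cons]
    simp +contextual only [Finset.inter_subset_right, true_and, List.forall_mem_cons,
      inter_grounds_inter]

lemma HasDisjointSupports.isComplex_joins (hL : HasDisjointSupports L)
    (hc : ∀ q ∈ L, IsComplex q.2) : IsComplex (joins L) := by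
  intro σ hσ τ hτ
  rw [mem_joins hL] at hσ ⊢
  exact ⟨hτ.trans hσ.1, fun q hq => hc q hq _ (hσ.2 q hq) _ (Finset.inter_subset_inter_right hτ)⟩

lemma HasDisjointSupports.card_eq_sum (hL : HasDisjointSupports L) (hσ : σ ⊆ grounds L) :
    σ.card = (L.map fun q => (σ ∩ q.1.toFinset).card).sum := by
  induction L generalizing σ with
  | nil => simp_all [grounds]
  | cons q L ih =>
    rw [grounds_cons] at hσ
    have hsplit : σ = σ ∩ q.1.toFinset ∪ σ ∩ grounds L := by
      rw [← Finset.inter_union_distrib_left, Finset.inter_eq_left.mpr hσ]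
    have hdisj : Disjoint (σ ∩ q.1.toFinset) (σ ∩ grounds L) :=
      hL.disjoint_grounds.mono Finset.inter_subset_right Finset.inter_subset_right
    rw [List.map_cons, List.sum_cons,
      ← List.map_congr_left fun r hr => by rw [← inter_grounds_inter hr],
      ← ih hL.of_cons Finset.inter_subset_right, ← Finset.card_union_of_disjoint hdisj,
      ← hsplit]

lemma HasDisjointSupports.sdiff_union_mem_joins (hL : HasDisjointSupports L)
    (hσ : σ ∈ joins L) {q} (hq : q ∈ L) {γ : Finset α} (hγ : γ ∈ q.2) :
    σ \ q.1.toFinset ∪ γ ∈ joins L := by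
  have hγq := hL.2 q hq γ hγ
  rw [mem_joins hL] at hσ ⊢
  refine ⟨Finset.union_subset (Finset.sdiff_subset.trans hσ.1)
    (hγq.trans (toFinset_subset_grounds hq)), fun r hr => ?_⟩
  rw [Finset.union_inter_distrib_right]
  rcases hL.eq_or_disjoint hq hr with rfl | hqr
  · rwa [Finset.sdiff_inter_self, Finset.empty_union, Finset.inter_eq_left.mpr hγq]
  · rw [Finset.disjoint_iff_inter_eq_empty.mp (hqr.mono_left hγq), Finset.union_empty,
      Finset.sdiff_inter_right_comm, Finset.sdiff_eq_self_of_disjoint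
        (hqr.symm.mono_left Finset.inter_subset_right)]
    exact hσ.2 r hr

lemma HasDisjointSupports.isFacet_inter (hL : HasDisjointSupports L)
    (hσ : IsFacet (joins L) σ) {q} (hq : q ∈ L) : IsFacet q.2 (σ ∩ q.1.toFinset) := by
  refine ⟨((mem_joins hL).mp hσ.1).2 q hq, fun γ hγ hσγ => ?_⟩
  have hγq := hL.2 q hq γ hγ
  have heq := hσ.2 _ (hL.sdiff_union_mem_joins hσ.1 hq hγ) fun a ha => by
    by_cases haq : a ∈ q.1.toFinset
    · exact Finset.mem_union_right _ (hσγ (Finset.mem_inter.mpr ⟨ha, haq⟩))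
    · exact Finset.mem_union_left _ (Finset.mem_sdiff.mpr ⟨ha, haq⟩)
  rw [heq, Finset.union_inter_distrib_right, Finset.sdiff_inter_self, Finset.empty_union,
    Finset.inter_eq_left.mpr hγq]

lemma HasDisjointSupports.isPure_joins (hL : HasDisjointSupports L)
    (hp : ∀ q ∈ L, IsPure q.2) : IsPure (joins L) := by
  intro σ τ hσ hτ
  rw [hL.card_eq_sum ((mem_joins hL).mp hσ.1).1, hL.card_eq_sum ((mem_joins hL).mp hτ.1).1]
  exact congrArg List.sum (List.map_congr_left fun q hq =>
    hp q hq _ _ (hL.isFacet_inter hσ hq) (hL.isFacet_inter hτ hq))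

lemma joinC_assoc (S₁ S₂ S₃ : Finset (Finset α)) :
    joinC (joinC S₁ S₂) S₃ = joinC S₁ (joinC S₂ S₃) := by
  ext σ
  simp only [mem_joinC]
  constructor
  · rintro ⟨_, ⟨a, ha, b, hb, rfl⟩, c, hc, rfl⟩
    exact ⟨a, ha, b ∪ c, ⟨b, hb, c, hc, rfl⟩, (Finset.union_assoc a b c).symm⟩
  · rintro ⟨a, ha, _, ⟨b, hb, c, hc, rfl⟩, rfl⟩
    exact ⟨a ∪ b, ⟨a, ha, b, hb, rfl⟩, c, hc, Finset.union_assoc a b c⟩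

lemma singleton_empty_joinC (S : Finset (Finset α)) : joinC {∅} S = S := by
  ext σ
  simp [mem_joinC]

lemma joins_append (L₁ L₂ : List (List α × Finset (Finset α))) :
    joins (L₁ ++ L₂) = joinC (joins L₁) (joins L₂) := by
  induction L₁ with
  | nil => exact (singleton_empty_joinC _).symm
  | cons q L ih => rw [List.cons_append, joins_cons, joins_cons, ih, joinC_assoc]

lemma restrictC_joinC (S₁ S₂ : Finset (Finset α)) (A : Finset α) :
    restrictC (joinC S₁ S₂) A = joinC (restrictC S₁ A) (restrictC S₂ A) := by
  ext σ
  simp only [mem_restrictC, mem_joinC]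
  constructor
  · rintro ⟨⟨σ₁, hσ₁, σ₂, hσ₂, rfl⟩, hA⟩
    exact ⟨σ₁, ⟨hσ₁, Finset.union_subset_left hA⟩, σ₂, ⟨hσ₂, Finset.union_subset_right hA⟩, rfl⟩
  · rintro ⟨σ₁, ⟨hσ₁, h₁⟩, σ₂, ⟨hσ₂, h₂⟩, rfl⟩
    exact ⟨⟨σ₁, hσ₁, σ₂, hσ₂, rfl⟩, Finset.union_subset h₁ h₂⟩

lemma restrictC_joins (A : Finset α) (f : List α × Finset (Finset α) → List α) :
    restrictC (joins L) A = joins (L.map fun q => (f q, restrictC q.2 A)) := by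
  induction L with
  | nil => ext σ; simp +contextual [joins, mem_restrictC]
  | cons q L ih => rw [List.map_cons, joins_cons, joins_cons, restrictC_joinC, ih]

lemma joins_map_congr_fst {F : List α × Finset (Finset α) → Finset (Finset α)}
    (f g : List α × Finset (Finset α) → List α) :
    joins (L.map fun q => (f q, F q)) = joins (L.map fun q => (g q, F q)) := by
  simp only [joins, List.map_map]
  rfl

lemma grounds_map_snd (F : List α × Finset (Finset α) → Finset (Finset α)) :
    grounds (L.map fun q => (q.1, F q)) = grounds L := by
  simp only [grounds, List.map_map]
  rfl

lemma disjoint_iff_forall_disjoint_inter {ρ τ : Finset α} (hρ : ρ ⊆ grounds L) :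
    Disjoint ρ τ ↔ ∀ q ∈ L, Disjoint (ρ ∩ q.1.toFinset) (τ ∩ q.1.toFinset) := by
  refine ⟨fun h q _ => h.mono Finset.inter_subset_left Finset.inter_subset_left, fun h => ?_⟩
  rw [Finset.disjoint_left]
  intro a haρ haτ
  obtain ⟨q, hq, haq⟩ := mem_grounds.mp (hρ haρ)
  exact Finset.disjoint_left.mp (h q hq) (Finset.mem_inter.mpr ⟨haρ, haq⟩)
    (Finset.mem_inter.mpr ⟨haτ, haq⟩)

lemma HasDisjointSupports.linkC_joins (hL : HasDisjointSupports L) {τ : Finset α}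
    (hτ : τ ⊆ grounds L) :
    linkC (joins L) τ = joins (L.map fun q => (q.1, linkC q.2 (τ ∩ q.1.toFinset))) := by
  ext ρ
  rw [mem_linkC, mem_joins hL, mem_joins hL,
    mem_joins (hL.map_snd fun q _ => linkC_subset), grounds_map_snd]
  simp only [List.mem_map, forall_exists_index, and_imp, forall_apply_eq_imp_iff₂, mem_linkC]
  simp only [← Finset.union_inter_distrib_right, Finset.union_subset_iff, hτ, and_true,
    forall_and]
  constructor
  · rintro ⟨⟨hρ, hρL⟩, hρτ, -, hρτL⟩
    exact ⟨hρ, hρL, (disjoint_iff_forall_disjoint_inter hρ).mp hρτ, hρτL⟩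
  · rintro ⟨hρ, hρL, hρτ, hρτL⟩
    exact ⟨⟨hρ, hρL⟩, (disjoint_iff_forall_disjoint_inter hρ).mpr hρτ, hρ, hρτL⟩

end Joins

section LexMinFacet

variable {R : Finset (Finset α)}

lemma foldl_greedy_spec (hR : IsComplex R) (l : List α) {τ : Finset α} (hτ : τ ∈ R) :
    let ρ := l.foldl (fun τ a => if insert a τ ∈ R then insert a τ else τ) τ
    ρ ∈ R ∧ τ ⊆ ρ ∧ ∀ a ∈ l, insert a ρ ∈ R → a ∈ ρ := by
  induction l generalizing τ with
  | nil => simp [hτ]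
  | cons b l ih =>
    intro ρ
    by_cases hb : insert b τ ∈ R
    · obtain ⟨hρ, hbρ, hmax⟩ := ih hb
      simp only [ρ, List.foldl_cons, if_pos hb, List.forall_mem_cons] at hρ hbρ hmax ⊢
      exact ⟨hρ, (Finset.subset_insert b τ).trans hbρ,
        fun _ => hbρ (Finset.mem_insert_self b τ), hmax⟩
    · obtain ⟨hρ, hτρ, hmax⟩ := ih hτ
      simp only [ρ, List.foldl_cons, if_neg hb, List.forall_mem_cons] at hρ hτρ hmax ⊢
      exact ⟨hρ, hτρ, fun h => absurd (hR _ h _ (Finset.insert_subset_insert b hτρ)) hb, hmax⟩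

lemma isFacet_lexMinFacet (hR : IsComplex R) (hemp : ∅ ∈ R) {w : List α}
    (hw : ∀ σ ∈ R, σ ⊆ w.toFinset) : IsFacet R (lexMinFacet w R) := by
  obtain ⟨hmem, -, hmax⟩ := foldl_greedy_spec hR w hemp
  exact IsFacet.of_insert hR hmem fun a ha =>
    hmax a (List.mem_toFinset.mp (hw _ ha (Finset.mem_insert_self a _))) ha

end LexMinFacet

section Index

variable {v : List α} {k : ℕ} {a b : α}

lemma toFinset_drop_of_nodup (hv : v.Nodup) :
    (v.drop k).toFinset = v.toFinset \ (v.take k).toFinset := by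
  ext b
  simp only [List.mem_toFinset, Finset.mem_sdiff]
  refine ⟨fun h => ⟨List.mem_of_mem_drop h, fun h' => List.disjoint_take_drop hv le_rfl h' h⟩,
    fun ⟨h, h'⟩ => ?_⟩
  rw [← List.take_append_drop k v, List.mem_append] at h
  exact h.resolve_left h'

lemma notMem_take_of_mem_drop (hv : v.Nodup) (ha : a ∈ v.drop k) : a ∉ v.take k := by
  rw [← List.mem_toFinset, toFinset_drop_of_nodup hv] at ha
  exact fun h => (Finset.mem_sdiff.mp ha).2 (List.mem_toFinset.mpr h)

lemma idxOf_take (ha : a ∈ v.take k) : (v.take k).idxOf a = v.idxOf a := by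
  conv_rhs => rw [← List.take_append_drop k v]
  exact (List.idxOf_append_of_mem ha).symm

lemma idxOf_drop (hv : v.Nodup) (ha : a ∈ v.drop k) :
    v.idxOf a = (v.take k).length + (v.drop k).idxOf a := by
  conv_lhs => rw [← List.take_append_drop k v]
  exact List.idxOf_append_of_notMem (notMem_take_of_mem_drop hv ha)

lemma idxOf_lt_idxOf_of_mem_take_of_mem_drop (hv : v.Nodup) (ha : a ∈ v.take k)
    (hb : b ∈ v.drop k) : v.idxOf a < v.idxOf b := by
  rw [← idxOf_take ha, idxOf_drop hv hb]
  exact Nat.lt_add_right _ (List.idxOf_lt_length_of_mem ha)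

end Index

section ShiftedComplex

variable {v : List α} {T : Finset (Finset α)} {k : ℕ} {σ τ ρ : Finset α}

lemma IsOrderedComplex.restrictC_take (hT : IsOrderedComplex v T) :
    IsOrderedComplex (v.take k) (restrictC T (v.take k).toFinset) :=
  ⟨hT.1.sublist (List.take_sublist k v), fun _ hσ => (mem_restrictC.mp hσ).2,
    hT.2.2.restrictC _⟩

lemma IsShifted.restrictC_take (hsh : IsShifted v T) :
    IsShifted (v.take k) (restrictC T (v.take k).toFinset) := by
  intro σ hσ e he f hf hfσ hfe
  rw [mem_restrictC] at hσ ⊢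
  have hfv : f ∈ v.toFinset :=
    List.mem_toFinset.mpr ((List.take_sublist k v).mem (List.mem_toFinset.mp hf))
  rw [idxOf_take (List.mem_toFinset.mp hf), idxOf_take (List.mem_toFinset.mp (hσ.2 he))] at hfe
  exact ⟨hsh σ hσ.1 e he f hfv hfσ hfe,
    Finset.insert_subset hf ((Finset.erase_subset e σ).trans hσ.2)⟩

/-- If `σ` were not a facet, a vertex of a larger face would lie beyond the initial segment and
could be shifted onto the missing vertex `x`. -/
lemma IsShifted.isFacet_of_isFacet_restrictC_take (hT : IsOrderedComplex v T)
    (hsh : IsShifted v T) (hσ : IsFacet (restrictC T (v.take k).toFinset) σ) {x : α}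
    (hxA : x ∈ (v.take k).toFinset) (hxσ : x ∉ σ) : IsFacet T σ := by
  obtain ⟨hσT, hσA⟩ := mem_restrictC.mp hσ.1
  obtain ⟨ρ, hσρ, hρ⟩ := exists_isFacet_superset hσT
  have hρA : ∀ y ∈ ρ, y ∈ (v.take k).toFinset → y ∈ σ := fun y hy hyA =>
    hσ.mem_of_insert (mem_restrictC.mpr
      ⟨hT.2.2 ρ hρ.1 _ (Finset.insert_subset hy hσρ), Finset.insert_subset hyA hσA⟩)
  suffices hρσ : ρ ⊆ σ by rwa [← hρσ.antisymm hσρ]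
  intro y hy
  by_contra hyσ
  have hyv : y ∈ v.drop k := by
    rw [← List.mem_toFinset, toFinset_drop_of_nodup hT.1]
    exact Finset.mem_sdiff.mpr ⟨hT.2.1 ρ hρ.1 hy, fun h => hyσ (hρA y hy h)⟩
  have hshift : insert x (ρ.erase y) ∈ T :=
    hsh ρ hρ.1 y hy x (List.mem_toFinset.mpr (List.mem_of_mem_take (List.mem_toFinset.mp hxA)))
      (fun h => hxσ (hρA x h hxA))
      (idxOf_lt_idxOf_of_mem_take_of_mem_drop hT.1 (List.mem_toFinset.mp hxA) hyv)
  have hσρy : σ ⊆ ρ.erase y := fun z hz =>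
    Finset.mem_erase.mpr ⟨fun hzy => hyσ (hzy ▸ hz), hσρ hz⟩
  exact hxσ (hσ.mem_of_insert (mem_restrictC.mpr ⟨hT.2.2 _ hshift _
    (Finset.insert_subset_insert x hσρy), Finset.insert_subset hxA hσA⟩))

lemma IsPure.restrictC_take (hT : IsOrderedComplex v T) (hp : IsPure T) (hsh : IsShifted v T) :
    IsPure (restrictC T (v.take k).toFinset) := by
  intro σ τ hσ hτ
  by_cases hτσ : τ ⊆ σ
  · rw [hτ.2 σ hσ.1 hτσ]
  by_cases hστ : σ ⊆ τ
  · rw [hσ.2 τ hτ.1 hστ]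
  obtain ⟨x, hxτ, hxσ⟩ := Finset.not_subset.mp hτσ
  obtain ⟨y, hyσ, hyτ⟩ := Finset.not_subset.mp hστ
  exact hp σ τ (hsh.isFacet_of_isFacet_restrictC_take hT hσ ((mem_restrictC.mp hτ.1).2 hxτ) hxσ)
    (hsh.isFacet_of_isFacet_restrictC_take hT hτ ((mem_restrictC.mp hσ.1).2 hyσ) hyτ)

lemma disjoint_take_of_mem_linkC (hT : IsComplex T)
    (hτ : IsFacet (restrictC T (v.take k).toFinset) τ) (hρ : ρ ∈ linkC T τ) :
    Disjoint ρ (v.take k).toFinset := by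
  obtain ⟨-, hρτ, hρτT⟩ := mem_linkC.mp hρ
  rw [Finset.disjoint_right]
  intro x hxA hxρ
  refine Finset.disjoint_left.mp hρτ hxρ (hτ.mem_of_insert (mem_restrictC.mpr ⟨?_, ?_⟩))
  · exact hT _ hρτT _ (Finset.insert_subset (Finset.mem_union_left τ hxρ) Finset.subset_union_right)
  · exact Finset.insert_subset hxA (mem_restrictC.mp hτ.1).2

lemma IsOrderedComplex.linkC_drop (hT : IsOrderedComplex v T)
    (hτ : IsFacet (restrictC T (v.take k).toFinset) τ) :
    IsOrderedComplex (v.drop k) (linkC T τ) := by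
  refine ⟨hT.1.sublist (List.drop_sublist k v), fun ρ hρ => ?_, hT.2.2.linkC τ⟩
  rw [toFinset_drop_of_nodup hT.1]
  exact Finset.subset_sdiff.mpr
    ⟨hT.2.1 ρ (mem_linkC.mp hρ).1, disjoint_take_of_mem_linkC hT.2.2 hτ hρ⟩

lemma IsShifted.linkC_drop (hT : IsOrderedComplex v T) (hsh : IsShifted v T)
    (hτ : IsFacet (restrictC T (v.take k).toFinset) τ) :
    IsShifted (v.drop k) (linkC T τ) := by
  intro ρ hρ e he f hf hfρ hfe
  obtain ⟨hρT, hρτ, hρτT⟩ := mem_linkC.mp hρ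
  have hfe' : v.idxOf f < v.idxOf e := by
    rw [idxOf_drop hT.1 (List.mem_toFinset.mp hf),
      idxOf_drop hT.1 (List.mem_toFinset.mp ((hT.linkC_drop hτ).2.1 ρ hρ he))]
    omega
  rw [toFinset_drop_of_nodup hT.1] at hf
  obtain ⟨hfv, hfA⟩ := Finset.mem_sdiff.mp hf
  have hfτ : f ∉ τ := fun h => hfA ((mem_restrictC.mp hτ.1).2 h)
  have heτ : e ∉ τ := Finset.disjoint_left.mp hρτ he
  refine mem_linkC.mpr ⟨hsh ρ hρT e he f hfv hfρ hfe', ?_, ?_⟩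
  · exact Finset.disjoint_insert_left.mpr ⟨hfτ, hρτ.mono_left (Finset.erase_subset e ρ)⟩
  · have hshift := hsh (ρ ∪ τ) hρτT e (Finset.mem_union_left τ he) f hfv
      (by simp [hfρ, hfτ]) hfe'
    rwa [Finset.erase_union_distrib, Finset.erase_eq_of_notMem heτ, ← Finset.insert_union]
      at hshift

lemma isFacet_union_of_isFacet_linkC (hT : IsComplex T)
    (hτ : IsFacet (restrictC T (v.take k).toFinset) τ) (hρ : IsFacet (linkC T τ) ρ) :
    IsFacet T (ρ ∪ τ) := by
  obtain ⟨-, hρτ, hρτT⟩ := mem_linkC.mp hρ.1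
  refine IsFacet.of_insert hT hρτT fun x hx => ?_
  by_cases hxA : x ∈ (v.take k).toFinset
  · refine Finset.mem_union_right ρ (hτ.mem_of_insert (mem_restrictC.mpr ⟨?_, ?_⟩))
    · exact hT _ hx _ (Finset.insert_subset_insert x Finset.subset_union_right)
    · exact Finset.insert_subset hxA (mem_restrictC.mp hτ.1).2
  · have hxτ : x ∉ τ := fun h => hxA ((mem_restrictC.mp hτ.1).2 h)
    refine Finset.mem_union_left τ (hρ.mem_of_insert (mem_linkC.mpr ⟨?_, ?_, ?_⟩))
    · exact hT _ hx _ (Finset.insert_subset_insert x Finset.subset_union_left)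
    · exact Finset.disjoint_insert_left.mpr ⟨hxτ, hρτ⟩
    · rwa [Finset.insert_union]

lemma IsPure.linkC (hT : IsComplex T) (hp : IsPure T)
    (hτ : IsFacet (restrictC T (v.take k).toFinset) τ) : IsPure (linkC T τ) := by
  intro ρ₁ ρ₂ h₁ h₂
  have hcard := hp _ _ (isFacet_union_of_isFacet_linkC hT hτ h₁)
    (isFacet_union_of_isFacet_linkC hT hτ h₂)
  rw [Finset.card_union_of_disjoint (mem_linkC.mp h₁.1).2.1,
    Finset.card_union_of_disjoint (mem_linkC.mp h₂.1).2.1] at hcard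
  omega

end ShiftedComplex

section Filter

lemma toFinset_filter_mem (l : List α) (I : Finset α) :
    (l.filter fun a => decide (a ∈ I)).toFinset = l.toFinset ∩ I := by
  ext a
  simp

lemma filter_take_eq_take_filter (w : List α) (I : Finset α) (k : ℕ) :
    let p := fun a => decide (a ∈ I)
    (w.take k).filter p = (w.filter p).take ((w.take k).filter p).length := by
  intro p
  have h := List.take_left (l₁ := (w.take k).filter p) (l₂ := (w.drop k).filter p)
  rw [← List.filter_append, List.take_append_drop] at h
  exact h.symm

lemma filter_drop_eq_drop_filter (w : List α) (I : Finset α) (k : ℕ) :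
    let p := fun a => decide (a ∈ I)
    (w.drop k).filter p = (w.filter p).drop ((w.take k).filter p).length := by
  intro p
  have h := List.drop_left (l₁ := (w.take k).filter p) (l₂ := (w.drop k).filter p)
  rw [← List.filter_append, List.take_append_drop] at h
  exact h.symm

lemma restrictC_toFinset_filter {I : Finset α} {T : Finset (Finset α)} (hT : ∀ σ ∈ T, σ ⊆ I)
    (l : List α) :
    restrictC T (l.filter fun a => decide (a ∈ I)).toFinset = restrictC T l.toFinset := by
  ext σ
  simp only [mem_restrictC, toFinset_filter_mem, Finset.subset_inter_iff]
  exact ⟨fun h => ⟨h.1, h.2.1⟩, fun h => ⟨h.1, h.2, hT σ h.1⟩⟩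

lemma filter_mem_eq_of_subset {w w₁ : List α} {I : Finset α} (hI : I ⊆ w₁.toFinset)
    (h : w.filter (fun a => decide (a ∈ w₁.toFinset)) = w₁) :
    w.filter (fun a => decide (a ∈ I)) = w₁.filter (fun a => decide (a ∈ I)) := by
  rw [← h, List.filter_filter]
  refine List.filter_congr fun a _ => ?_
  by_cases ha : a ∈ I
  · simp [ha, hI ha]
  · simp [ha]

end Filter

def IsPureShifted (v : List α) (T : Finset (Finset α)) : Prop :=
  IsOrderedComplex v T ∧ IsPure T ∧ IsShifted v T

namespace IsPureShifted

variable {w : List α} {I : Finset α} {T : Finset (Finset α)}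

lemma subset_of_mem (h : IsPureShifted (w.filter fun a => decide (a ∈ I)) T) :
    ∀ σ ∈ T, σ ⊆ I := fun σ hσ =>
  (h.1.2.1 σ hσ).trans (toFinset_filter_mem w I ▸ Finset.inter_subset_right)

lemma restrictC_take {v : List α} (h : IsPureShifted v T) (k : ℕ) :
    IsPureShifted (v.take k) (restrictC T (v.take k).toFinset) :=
  ⟨h.1.restrictC_take, h.2.1.restrictC_take h.1 h.2.2, h.2.2.restrictC_take⟩

lemma linkC_drop {v : List α} {k : ℕ} {τ : Finset α} (h : IsPureShifted v T)
    (hτ : IsFacet (restrictC T (v.take k).toFinset) τ) :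
    IsPureShifted (v.drop k) (linkC T τ) :=
  ⟨h.1.linkC_drop hτ, h.2.1.linkC h.1.2.2 hτ, h.2.2.linkC_drop h.1 hτ⟩

/-- An initial segment of `w` meets the ground set `I` in an initial segment of `w|I`. -/
lemma restrictC_filter_take (h : IsPureShifted (w.filter fun a => decide (a ∈ I)) T) (k : ℕ) :
    IsPureShifted ((w.take k).filter fun a => decide (a ∈ I))
      (restrictC T (w.take k).toFinset) := by
  rw [← restrictC_toFinset_filter h.subset_of_mem, filter_take_eq_take_filter]
  exact h.restrictC_take _

lemma linkC_filter_drop {k : ℕ} {τ : Finset α}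
    (h : IsPureShifted (w.filter fun a => decide (a ∈ I)) T)
    (hτ : IsFacet (restrictC T (w.take k).toFinset) τ) :
    IsPureShifted ((w.drop k).filter fun a => decide (a ∈ I)) (linkC T τ) := by
  rw [← restrictC_toFinset_filter h.subset_of_mem, filter_take_eq_take_filter] at hτ
  rw [filter_drop_eq_drop_filter]
  exact h.linkC_drop hτ

end IsPureShifted

def IsShuffleDecomposition (w : List α) (L : List (List α × Finset (Finset α))) : Prop :=
  w.Nodup ∧ (L.Pairwise fun q r => Disjoint q.1.toFinset r.1.toFinset) ∧
    w.toFinset = grounds L ∧ ∀ q ∈ L, w.filter (fun a => decide (a ∈ q.1.toFinset)) = q.1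

namespace IsShuffleDecomposition

variable {w : List α} {L : List (List α × Finset (Finset α))}

lemma hasDisjointSupports (h : IsShuffleDecomposition w L)
    (hL : ∀ q ∈ L, IsOrderedComplex q.1 q.2) : HasDisjointSupports L :=
  ⟨h.2.1, fun q hq => (hL q hq).2.1⟩

lemma append {w₁ w₂ : List α} {L₁ L₂ : List (List α × Finset (Finset α))}
    (h₁ : IsShuffleDecomposition w₁ L₁) (h₂ : IsShuffleDecomposition w₂ L₂)
    (hd : Disjoint w₁.toFinset w₂.toFinset) (hw : IsShuffle w₁ w₂ w) :
    IsShuffleDecomposition w (L₁ ++ L₂) := by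
  have hsub₁ : ∀ q ∈ L₁, q.1.toFinset ⊆ w₁.toFinset := fun q hq =>
    h₁.2.2.1 ▸ toFinset_subset_grounds hq
  have hsub₂ : ∀ q ∈ L₂, q.1.toFinset ⊆ w₂.toFinset := fun q hq =>
    h₂.2.2.1 ▸ toFinset_subset_grounds hq
  refine ⟨hw.1, List.pairwise_append.mpr ⟨h₁.2.1, h₂.2.1, fun q hq r hr =>
    hd.mono (hsub₁ q hq) (hsub₂ r hr)⟩, ?_, ?_⟩
  · ext a
    simp only [hw.2.1, h₁.2.2.1, h₂.2.2.1, Finset.mem_union, mem_grounds, List.mem_append]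
    grind
  · intro q hq
    rcases List.mem_append.mp hq with hq | hq
    · rw [filter_mem_eq_of_subset (hsub₁ q hq) hw.2.2.1, h₁.2.2.2 q hq]
    · rw [filter_mem_eq_of_subset (hsub₂ q hq) hw.2.2.2, h₂.2.2.2 q hq]

lemma sublist {w' : List α} (h : IsShuffleDecomposition w L) (hw' : w'.Sublist w)
    (F : List α × Finset (Finset α) → Finset (Finset α)) :
    IsShuffleDecomposition w'
      (L.map fun q => (w'.filter fun a => decide (a ∈ q.1.toFinset), F q)) := by
  refine ⟨h.1.sublist hw', List.pairwise_map.mpr (h.2.1.imp fun hd => ?_), ?_, ?_⟩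
  · simpa only [toFinset_filter_mem] using
      hd.mono Finset.inter_subset_right Finset.inter_subset_right
  · ext a
    simp only [mem_grounds, List.mem_map, List.mem_toFinset]
    constructor
    · intro ha
      obtain ⟨q, hq, haq⟩ := mem_grounds.mp (h.2.2.1 ▸ List.mem_toFinset.mpr (hw'.subset ha))
      exact ⟨_, ⟨q, hq, rfl⟩, List.mem_filter.mpr ⟨ha, by simpa using haq⟩⟩
    · rintro ⟨_, ⟨q, -, rfl⟩, haq⟩
      exact List.mem_of_mem_filter haq
  · simp only [List.mem_map, forall_exists_index, and_imp, forall_apply_eq_imp_iff₂]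
    intro q _
    exact List.filter_congr fun a ha => by simp [ha]

end IsShuffleDecomposition

lemma isShuffledJoinOfShifted_iff {w : List α} {S : Finset (Finset α)} :
    IsShuffledJoinOfShifted w S ↔
      ∃ L, IsShuffleDecomposition w L ∧ S = joins L ∧ ∀ q ∈ L, IsPureShifted q.1 q.2 :=
  ⟨fun ⟨L, h₁, h₂, h₃, h₄, h₅, h₆⟩ => ⟨L, ⟨h₁, h₂, h₃, h₄⟩, h₅, h₆⟩,
    fun ⟨L, ⟨h₁, h₂, h₃, h₄⟩, h₅, h₆⟩ => ⟨L, h₁, h₂, h₃, h₄, h₅, h₆⟩⟩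

namespace IsShuffledJoinOfShifted

variable {w : List α} {S : Finset (Finset α)}

lemma isOrderedComplex (h : IsShuffledJoinOfShifted w S) : IsOrderedComplex w S := by
  obtain ⟨L, hdec, rfl, hL⟩ := isShuffledJoinOfShifted_iff.mp h
  have hsupp := hdec.hasDisjointSupports fun q hq => (hL q hq).1
  exact ⟨hdec.1, fun σ hσ => hdec.2.2.1 ▸ ((mem_joins hsupp).mp hσ).1,
    hsupp.isComplex_joins fun q hq => (hL q hq).1.2.2⟩

lemma isPure (h : IsShuffledJoinOfShifted w S) : IsPure S := by
  obtain ⟨L, hdec, rfl, hL⟩ := isShuffledJoinOfShifted_iff.mp h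
  exact (hdec.hasDisjointSupports fun q hq => (hL q hq).1).isPure_joins fun q hq => (hL q hq).2.1

lemma empty (hw : w.Nodup) : IsShuffledJoinOfShifted w ∅ := by
  refine isShuffledJoinOfShifted_iff.mpr ⟨[(w, ∅)], ⟨hw, by simp, by simp [grounds], ?_⟩, ?_, ?_⟩
  · simp
  · simp [joins, joinC]
  · simp [IsPureShifted, IsOrderedComplex, IsComplex, IsPure, IsFacet, IsShifted, hw]

lemma joinC {w₁ w₂ : List α} {S₁ S₂ : Finset (Finset α)} (h₁ : IsShuffledJoinOfShifted w₁ S₁)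
    (h₂ : IsShuffledJoinOfShifted w₂ S₂) (hd : Disjoint w₁.toFinset w₂.toFinset)
    (hw : IsShuffle w₁ w₂ w) : IsShuffledJoinOfShifted w (joinC S₁ S₂) := by
  obtain ⟨L₁, hdec₁, rfl, hL₁⟩ := isShuffledJoinOfShifted_iff.mp h₁
  obtain ⟨L₂, hdec₂, rfl, hL₂⟩ := isShuffledJoinOfShifted_iff.mp h₂
  refine isShuffledJoinOfShifted_iff.mpr
    ⟨L₁ ++ L₂, hdec₁.append hdec₂ hd hw, (joins_append L₁ L₂).symm, fun q hq => ?_⟩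
  exact (List.mem_append.mp hq).elim (hL₁ q) (hL₂ q)

lemma restrictC_take (h : IsShuffledJoinOfShifted w S) (k : ℕ) :
    IsShuffledJoinOfShifted (w.take k) (restrictC S (w.take k).toFinset) := by
  obtain ⟨L, hdec, rfl, hL⟩ := isShuffledJoinOfShifted_iff.mp h
  refine isShuffledJoinOfShifted_iff.mpr ⟨_, hdec.sublist (List.take_sublist k w)
    fun q => restrictC q.2 (w.take k).toFinset, restrictC_joins _ _, ?_⟩
  simp only [List.mem_map, forall_exists_index, and_imp, forall_apply_eq_imp_iff₂]
  intro q hq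
  have hq' := hL q hq
  rw [← hdec.2.2.2 q hq] at hq'
  exact hq'.restrictC_filter_take k

/-- Only the fact that `lexMinFacet` picks some facet of `Σ|A` matters: the link of a facet of
`Σ|A` in the join is the join of the links of its traces, which are facets of the `Σ_j|A`. -/
lemma contractC_take (h : IsShuffledJoinOfShifted w S) (k : ℕ) :
    IsShuffledJoinOfShifted (w.drop k) (contractC w S (w.take k).toFinset) := by
  have hS := h.isOrderedComplex
  by_cases hemp : ∅ ∈ S
  swap
  · obtain rfl : S = ∅ :=
      Finset.eq_empty_of_forall_notMem fun σ hσ => hemp (hS.2.2 σ hσ ∅ σ.empty_subset)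
    exact empty (hS.1.sublist (List.drop_sublist k w))
  obtain ⟨L, hdec, rfl, hL⟩ := isShuffledJoinOfShifted_iff.mp h
  have hsupp := hdec.hasDisjointSupports fun q hq => (hL q hq).1
  set A := (w.take k).toFinset
  set τ := lexMinFacet w (restrictC (joins L) A)
  have hτ : IsFacet (restrictC (joins L) A) τ :=
    isFacet_lexMinFacet (hS.2.2.restrictC A) (mem_restrictC.mpr ⟨hemp, A.empty_subset⟩)
      fun σ hσ => hS.2.1 σ (mem_restrictC.mp hσ).1
  have hτL : τ ⊆ grounds L := hdec.2.2.1 ▸ hS.2.1 τ (mem_restrictC.mp hτ.1).1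
  rw [restrictC_joins A Prod.fst] at hτ
  refine isShuffledJoinOfShifted_iff.mpr ⟨_, hdec.sublist (List.drop_sublist k w)
    fun q => linkC q.2 (τ ∩ q.1.toFinset), ?_, ?_⟩
  · rw [contractC, hsupp.linkC_joins hτL]
    exact joins_map_congr_fst _ _
  simp only [List.mem_map, forall_exists_index, and_imp, forall_apply_eq_imp_iff₂]
  intro q hq
  have hq' := hL q hq
  rw [← hdec.2.2.2 q hq] at hq'
  exact hq'.linkC_filter_drop
    ((hsupp.map_snd fun q _ => restrictC_subset A).isFacet_inter hτ (List.mem_map_of_mem hq))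

end IsShuffledJoinOfShifted

/-- The class of shuffled joins of pure shifted ordered complexes is a Hopf class. -/
theorem isHopfClass_shuffledJoinsOfShifted :
    IsHopfClass {p : List α × Finset (Finset α) | IsShuffledJoinOfShifted p.1 p.2} :=
  ⟨fun _ hp => ⟨hp.isOrderedComplex, hp.isPure⟩,
    fun _ h₁ _ h₂ hd _ hw => h₁.joinC h₂ hd hw,
    fun _ hp k => ⟨(hp.restrictC_take k).isPure, hp.restrictC_take k⟩,
    fun _ hp k => hp.contractC_take k⟩

end OrderedComplexes
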